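/- Let a, b ≥ 1 be integers, N = 2^a·3^b, n ≥ 1, and let i_j ∈ {0, …, N−1} for −n ≤ j ≤ n. Set D = Σ_{m=0}^{n} i_{−m} / N^{m+1} and C = Σ_{m=1}^{n} i_m N^{m−1}. Then the atom of the refined partition is a single rectangle: {x ∈ F : rep(N^m·x) ∈ A_{i_{−m}} for all 0 ≤ m ≤ n, and rep(N^{−m}·x) ∈ A_{i_m} for all 1 ≤ m ≤ n} = [D, D + 1/N^{n+1}) × (2^{an}ℤ₂ − C) × (3^{bn}ℤ₃ − C); in particular it has real width 1/N^{n+1}, 2-adic diameter 2^{−an} and 3-adic diameter 3^{−bn}. -/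

import Mathlib

open Set

noncomputable section

/-- The ambient group `G = ℝ × ℚ₂ × ℚ₃`. -/
abbrev G : Type := ℝ × ℚ_[2] × ℚ_[3]

/-- The diagonal embedding of `ℚ` into `G`. -/
def Δ (r : ℚ) : G := ((r : ℝ), (r : ℚ_[2]), (r : ℚ_[3]))

/-- `ℤ[1/6]`, the rationals expressible with denominator `6^k`. -/
def zInv6 : Set ℚ := {q | ∃ (z : ℤ) (k : ℕ), q = z / 6 ^ k}

/-- `Γ = Δ(ℤ[1/6])`. -/
def Γ : Set G := Δ '' zInv6

/-- The fundamental domain `F = [0,1) × ℤ₂ × ℤ₃`. -/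
def F : Set G := {x | x.1 ∈ Set.Ico (0 : ℝ) 1 ∧ ‖x.2.1‖ ≤ 1 ∧ ‖x.2.2‖ ≤ 1}

/-- Coordinatewise multiplication by a rational on `G`. -/
def act (q : ℚ) (x : G) : G :=
  ((q : ℝ) * x.1, (q : ℚ_[2]) * x.2.1, (q : ℚ_[3]) * x.2.2)

/-- The atom `A_k = [k/N, (k+1)/N) × ℤ₂ × ℤ₃` of the partition `ξ`. -/
def A (N k : ℕ) : Set G :=
  {x | x.1 ∈ Set.Ico ((k : ℝ) / N) (((k : ℝ) + 1) / N) ∧ ‖x.2.1‖ ≤ 1 ∧ ‖x.2.2‖ ≤ 1}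

/-!
Write `x = (t, u, v) ∈ F`. For `m ≥ 0` the `p`-adic coordinates of `N^m x` stay integral, so `rep`
subtracts an integer from `N^m x`, and `rep (N^m x) ∈ A_k` says that the base-`N` digit of `t` in
position `m + 1` is `k`; the conditions for `m ≤ n` pin `t` down to the `N`-adic interval
`[D, D + N^{-(n+1)})`. For `m ≥ 1`, `rep` subtracts `Δ(-e / N^m)` for an integer `e` with
`e ≡ -(u, v)` modulo `N^m = 2^{am} 3^{bm}` in `ℤ₂ × ℤ₃`, and since `0 ≤ t < 1`,
`rep (N^{-m} x) ∈ A_k` says that this residue `e ∈ [0, N^m)` has leading digit `k`. Residues modulo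
successive powers of `N` are compatible, so the conditions for `1 ≤ m ≤ n` say exactly that
`-(u, v) ≡ C` modulo `N^n`, i.e. `u ∈ 2^{an}ℤ₂ - C` and `v ∈ 3^{bn}ℤ₃ - C`.
-/

namespace IsUltrametricDist

variable {S : Type*} [SeminormedAddCommGroup S] [IsUltrametricDist S] {x y : S} {r : ℝ}

lemma norm_sub_le_of_le (hx : ‖x‖ ≤ r) (hy : ‖y‖ ≤ r) : ‖x - y‖ ≤ r := by
  rw [sub_eq_add_neg]
  exact (IsUltrametricDist.norm_add_le_max x (-y)).trans (max_le hx (by rwa [norm_neg]))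

lemma norm_le_iff_norm_sub_le (hy : ‖y‖ ≤ r) : ‖x‖ ≤ r ↔ ‖x - y‖ ≤ r :=
  ⟨fun hx => norm_sub_le_of_le hx hy,
    fun h => sub_add_cancel x y ▸ (norm_add_le_max _ _).trans (max_le h hy)⟩

end IsUltrametricDist

lemma norm_inv_mul_sub_le_one_iff {K : Type*} [NormedDivisionRing K] {s : K} (hs : s ≠ 0)
    (u q : K) : ‖s⁻¹ * u - q‖ ≤ 1 ↔ ‖u - s * q‖ ≤ ‖s‖ := by
  rw [show u - s * q = s * (s⁻¹ * u - q) by rw [mul_sub, mul_inv_cancel_left₀ hs], norm_mul,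
    mul_le_iff_le_one_right (norm_pos_iff.mpr hs)]

lemma exists_norm_le_one_eq_mul_sub_iff {K : Type*} [NormedDivisionRing K] {s : K} (hs : s ≠ 0)
    (u c : K) : (∃ z : K, ‖z‖ ≤ 1 ∧ u = s * z - c) ↔ ‖u + c‖ ≤ ‖s‖ := by
  constructor
  · rintro ⟨z, hz, rfl⟩
    simpa [norm_mul] using mul_le_of_le_one_right (norm_nonneg s) hz
  · intro h
    refine ⟨s⁻¹ * (u + c), ?_, by rw [mul_inv_cancel_left₀ hs, add_sub_cancel_right]⟩
    rw [norm_mul, norm_inv]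
    exact inv_mul_le_one_of_le₀ h (norm_nonneg s)

lemma norm_inv_mul_sub_intCast_div_le_one_iff {K : Type*} [NormedField K] [CharZero K] {s : ℕ}
    (hs : s ≠ 0) (u : K) (e : ℤ) :
    ‖(s : K)⁻¹ * u - ((((-e : ℤ) : ℚ) / s : ℚ) : K)‖ ≤ 1 ↔ ‖u + e‖ ≤ ‖(s : K)‖ := by
  rw [norm_inv_mul_sub_le_one_iff (Nat.cast_ne_zero.mpr hs)]
  push_cast
  rw [mul_div_cancel₀ _ (Nat.cast_ne_zero.mpr hs), sub_neg_eq_add]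

lemma norm_natCast_pow_le_one {p : ℕ} [Fact p.Prime] (N m : ℕ) : ‖(N : ℚ_[p]) ^ m‖ ≤ 1 := by
  rw [norm_pow]
  exact pow_le_one₀ (norm_nonneg _) (IsUltrametricDist.norm_natCast_le_one _ N)

lemma norm_natCast_pow_mul_le_one {p : ℕ} [Fact p.Prime] (N m : ℕ) {u : ℚ_[p]} (hu : ‖u‖ ≤ 1) :
    ‖(N : ℚ_[p]) ^ m * u‖ ≤ 1 :=
  norm_mul_le_of_le (norm_natCast_pow_le_one N m) hu |>.trans_eq (one_mul 1)

lemma Padic.norm_intCast_le_norm_pow_iff_dvd {p : ℕ} [Fact p.Prime] (d : ℤ) (k : ℕ) :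
    ‖(d : ℚ_[p])‖ ≤ ‖(p : ℚ_[p]) ^ k‖ ↔ (p : ℤ) ^ k ∣ d := by
  rw [Padic.norm_p_pow, Padic.norm_int_le_pow_iff_dvd]

lemma norm_natCast_pow_two {a b N : ℕ} (hN : N = 2 ^ a * 3 ^ b) (m : ℕ) :
    ‖(N : ℚ_[2]) ^ m‖ = ‖((2 : ℕ) : ℚ_[2]) ^ (a * m)‖ := by
  have h3 : ‖(3 : ℚ_[2])‖ = 1 := by
    exact_mod_cast Padic.norm_natCast_eq_one_iff.mpr (by norm_num : Nat.Coprime 2 3)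
  simp [hN, mul_pow, ← pow_mul, h3]

lemma norm_natCast_pow_three {a b N : ℕ} (hN : N = 2 ^ a * 3 ^ b) (m : ℕ) :
    ‖(N : ℚ_[3]) ^ m‖ = ‖((3 : ℕ) : ℚ_[3]) ^ (b * m)‖ := by
  have h2 : ‖(2 : ℚ_[3])‖ = 1 := by
    exact_mod_cast Padic.norm_natCast_eq_one_iff.mpr (by norm_num : Nat.Coprime 3 2)
  simp [hN, mul_pow, ← pow_mul, h2]

lemma dvd_iff_norm_le_norm_pow {a b N : ℕ} (hN : N = 2 ^ a * 3 ^ b) (m : ℕ) (d : ℤ) :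
    (N : ℤ) ^ m ∣ d ↔ ‖(d : ℚ_[2])‖ ≤ ‖(N : ℚ_[2]) ^ m‖ ∧ ‖(d : ℚ_[3])‖ ≤ ‖(N : ℚ_[3]) ^ m‖ := by
  rw [norm_natCast_pow_two hN, norm_natCast_pow_three hN,
    Padic.norm_intCast_le_norm_pow_iff_dvd, Padic.norm_intCast_le_norm_pow_iff_dvd]
  have hNm : (N : ℤ) ^ m = 2 ^ (a * m) * 3 ^ (b * m) := by simp [hN, mul_pow, pow_mul]
  have hcop : IsCoprime ((2 : ℤ) ^ (a * m)) (3 ^ (b * m)) :=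
    (Int.isCoprime_iff_gcd_eq_one.mpr rfl).pow
  rw [hNm]
  exact ⟨fun h => ⟨dvd_of_mul_right_dvd h, dvd_of_mul_left_dvd h⟩,
    fun h => hcop.mul_dvd (by exact_mod_cast h.1) (by exact_mod_cast h.2)⟩

lemma exists_int_sub_mem_Ico_iff {α β : ℝ} (hα : 0 ≤ α) (hβ : β ≤ 1) (y : ℝ) :
    (∃ z : ℤ, y - z ∈ Ico α β) ↔ Int.fract y ∈ Ico α β := by
  refine ⟨fun ⟨z, hz⟩ => ?_, fun h => ⟨⌊y⌋, by rwa [Int.self_sub_floor]⟩⟩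
  rwa [Int.fract_eq_iff.mpr ⟨hα.trans hz.1, hz.2.trans_le hβ, z, by ring⟩]

lemma mem_Ico_add_div_iff {s : ℝ} (hs : 0 < s) (D α β t : ℝ) :
    t ∈ Ico (D + α / s) (D + β / s) ↔ s * (t - D) ∈ Ico α β := by
  simp only [mem_Ico, ← le_sub_iff_add_le', ← sub_lt_iff_lt_add', div_le_iff₀ hs,
    lt_div_iff₀ hs, mul_comm s]

lemma intCast_add_mem_Ico_iff {t : ℝ} (ht : t ∈ Ico 0 1) (e A B : ℤ) :
    (e : ℝ) + t ∈ Ico (A : ℝ) B ↔ e ∈ Ico A B := by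
  obtain ⟨ht₀, ht₁⟩ := ht
  constructor
  · rintro ⟨h₁, h₂⟩
    have hA : (A : ℝ) < e + 1 := by linarith
    have hB : (e : ℝ) < B := by linarith
    exact ⟨Int.lt_add_one_iff.mp (by exact_mod_cast hA), by exact_mod_cast hB⟩
  · rintro ⟨h₁, h₂⟩
    have hA : (A : ℝ) ≤ e := by exact_mod_cast h₁
    have hB : (e : ℝ) + 1 ≤ B := by exact_mod_cast h₂
    exact ⟨by linarith, by linarith⟩

lemma exists_natCast_eq_pow_mul_sum_div_pow {N : ℕ} (hN : 0 < N) (d : ℕ → ℕ) (n : ℕ) :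
    ∃ M : ℕ, (N : ℝ) ^ n * ∑ j ∈ Finset.range n, (d j : ℝ) / N ^ (j + 1) = M := by
  induction n with
  | zero => exact ⟨0, by simp⟩
  | succ n ih =>
    obtain ⟨M, hM⟩ := ih
    refine ⟨N * M + d n, ?_⟩
    have : (N : ℝ) ^ (n + 1) ≠ 0 := by positivity
    rw [Finset.sum_range_succ, mul_add, mul_div_cancel₀ _ this, pow_succ', mul_assoc, hM]
    push_cast
    ring

lemma mem_Ico_and_fract_mem_Ico_iff {N d : ℕ} (hd : d < N) {s D : ℝ} (hs : 0 < s) {M : ℤ}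
    (hM : s * D = M) (t : ℝ) :
    (t ∈ Ico D (D + 1 / s) ∧ Int.fract (s * t) ∈ Ico ((d : ℝ) / N) ((d + 1) / N)) ↔
      t ∈ Ico (D + d / (s * N)) (D + d / (s * N) + 1 / (s * N)) := by
  have hN : (0 : ℝ) < N := by exact_mod_cast d.zero_le.trans_lt hd
  have hdN : ((d : ℝ) + 1) / N ≤ 1 := (div_le_one hN).mpr (by exact_mod_cast hd)
  have hy : s * (t - D) = s * t - M := by rw [mul_sub, hM]
  have hcoarse := mem_Ico_add_div_iff hs D 0 1 t
  rw [zero_div, add_zero] at hcoarse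
  rw [show D + d / (s * N) + 1 / (s * N) = D + (d + 1) / N / s by field_simp; ring,
    show D + d / (s * N) = D + d / N / s by field_simp, mem_Ico_add_div_iff hs, hcoarse, hy]
  have hfract : s * t - M ∈ Ico 0 1 → Int.fract (s * t) = s * t - M :=
    fun h => Int.fract_eq_iff.mpr ⟨h.1, h.2, M, by ring⟩
  constructor
  · rintro ⟨h01, h⟩
    rwa [← hfract h01]
  · intro h
    have h01 : s * t - M ∈ Ico 0 1 :=
      ⟨(by positivity : (0 : ℝ) ≤ d / N).trans h.1, h.2.trans_le hdN⟩
    exact ⟨h01, by rwa [hfract h01]⟩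

theorem mem_Ico_sum_digits_iff {N n : ℕ} {d : ℕ → ℕ} (hd : ∀ j < n, d j < N) (t : ℝ) :
    (t ∈ Ico 0 1 ∧
        ∀ m < n, Int.fract ((N : ℝ) ^ m * t) ∈ Ico ((d m : ℝ) / N) ((d m + 1) / N)) ↔
      t ∈ Ico (∑ j ∈ Finset.range n, (d j : ℝ) / N ^ (j + 1))
        (∑ j ∈ Finset.range n, (d j : ℝ) / N ^ (j + 1) + 1 / N ^ n) := by
  induction n with
  | zero => simp
  | succ n ih =>
    have hN : 0 < N := (d n).zero_le.trans_lt (hd n (by omega))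
    obtain ⟨M, hM⟩ := exists_natCast_eq_pow_mul_sum_div_pow hN d n
    rw [Nat.forall_lt_succ_right, ← and_assoc, ih fun j hj => hd j (by omega),
      mem_Ico_and_fract_mem_Ico_iff (hd n (by omega)) (by positivity) (M := M)
        (by exact_mod_cast hM),
      Finset.sum_range_succ, pow_succ]

lemma sum_digits_lt {N n : ℕ} {c : ℕ → ℕ} (hc : ∀ j < n, c j < N) :
    ∑ j ∈ Finset.range n, c j * N ^ j < N ^ n := by
  induction n with
  | zero => simp
  | succ n ih =>
    rw [Finset.sum_range_succ, pow_succ]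
    have := ih fun j hj => hc j (by omega)
    have := Nat.mul_le_mul_right (N ^ n) (hc n (by omega))
    rw [Nat.succ_mul] at this
    linarith [mul_comm N (N ^ n)]

/-- `R m` is the class modulo `N^m` of an `N`-adic integer; the left side says that its base-`N`
digits in positions `0, …, n - 1` are `c 0, …, c (n - 1)`. -/
theorem forall_exists_digit_iff {N n : ℕ} {R : ℕ → ℤ → Prop} (h0 : R 0 0)
    (hmono : ∀ m e, R (m + 1) e → R m e)
    (hcoset : ∀ m e, R m e → ∀ e', R m e' ↔ (N : ℤ) ^ m ∣ e' - e)
    {c : ℕ → ℕ} (hc : ∀ j < n, c j < N) :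
    (∀ m < n, ∃ e : ℤ, e ∈ Ico (c m * (N : ℤ) ^ m) ((c m + 1) * N ^ m) ∧ R (m + 1) e) ↔
      R n (∑ j ∈ Finset.range n, c j * N ^ j : ℕ) := by
  induction n with
  | zero => simpa using h0
  | succ n ih =>
    rw [Nat.forall_lt_succ_right, ih fun j hj => hc j (by omega), Finset.sum_range_succ]
    set C := ∑ j ∈ Finset.range n, c j * N ^ j
    have hC : (C : ℤ) < N ^ n := by exact_mod_cast sum_digits_lt fun j hj => hc j (by omega)
    push_cast
    constructor
    · rintro ⟨hRC, e, ⟨he₁, he₂⟩, hRe⟩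
      obtain ⟨w, hw⟩ := (hcoset n C hRC e).mp (hmono n e hRe)
      have hNn : (0 : ℤ) < N ^ n := by
        have : 0 < N := (c n).zero_le.trans_lt (hc n (by omega))
        positivity
      obtain rfl : w = c n := by
        have h₁ : ((c n : ℤ) - 1) * N ^ n < w * N ^ n := by nlinarith
        have h₂ : w * N ^ n < ((c n : ℤ) + 1) * N ^ n := by nlinarith
        have := lt_of_mul_lt_mul_right h₁ hNn.le
        have := lt_of_mul_lt_mul_right h₂ hNn.le
        omega
      rwa [show (C : ℤ) + c n * N ^ n = e by linarith]
    · intro h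
      exact ⟨(hcoset n _ (hmono n _ h) C).mpr ⟨-c n, by ring⟩, _, ⟨by linarith, by linarith⟩, h⟩

lemma intCast_mem_zInv6 (z : ℤ) : (z : ℚ) ∈ zInv6 := ⟨z, 0, by simp⟩

lemma sub_mem_zInv6 {p q : ℚ} (hp : p ∈ zInv6) (hq : q ∈ zInv6) : p - q ∈ zInv6 := by
  obtain ⟨z, k, rfl⟩ := hp
  obtain ⟨w, l, rfl⟩ := hq
  refine ⟨z * 6 ^ l - w * 6 ^ k, k + l, ?_⟩
  push_cast
  field_simp
  ring

lemma intCast_mul_mem_zInv6 (z : ℤ) {q : ℚ} (hq : q ∈ zInv6) : z * q ∈ zInv6 := by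
  obtain ⟨w, k, rfl⟩ := hq
  exact ⟨z * w, k, by push_cast; ring⟩

lemma intCast_div_mem_zInv6 (z : ℤ) {M k : ℕ} (hM : M ∣ 6 ^ k) : (z / M : ℚ) ∈ zInv6 := by
  obtain ⟨r, hr⟩ := hM
  have hr0 : (r : ℚ) ≠ 0 := by rintro h; simp_all
  refine ⟨z * r, k, ?_⟩
  rw [show ((6 : ℚ) ^ k) = ((6 ^ k : ℕ) : ℚ) by push_cast; ring, hr]
  push_cast
  field_simp

lemma natCast_pow_dvd_six_pow {a b N : ℕ} (hN : N = 2 ^ a * 3 ^ b) (m : ℕ) :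
    N ^ m ∣ 6 ^ ((a + b) * m) := by
  rw [pow_mul, hN]
  refine pow_dvd_pow_of_dvd ?_ m
  rw [show 6 ^ (a + b) = 2 ^ (a + b) * 3 ^ (a + b) by rw [← mul_pow]; norm_num]
  exact mul_dvd_mul (pow_dvd_pow 2 (by omega)) (pow_dvd_pow 3 (by omega))

lemma coprime_den_of_norm_le_one {p : ℕ} [Fact p.Prime] {q : ℚ} (hq : ‖(q : ℚ_[p])‖ ≤ 1) :
    p.Coprime q.den :=
  PadicInt.norm_natCast_eq_one_iff.mp (PadicInt.isUnit_iff.mp (PadicInt.isUnit_den q hq))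

theorem exists_intCast_eq_of_mem_zInv6 {q : ℚ} (hq : q ∈ zInv6) (h₂ : ‖(q : ℚ_[2])‖ ≤ 1)
    (h₃ : ‖(q : ℚ_[3])‖ ≤ 1) : ∃ z : ℤ, q = z := by
  obtain ⟨z, k, rfl⟩ := hq
  have hden : (z / 6 ^ k : ℚ).den ∣ 6 ^ k := by
    have := Rat.den_dvd z (6 ^ k)
    rw [Rat.divInt_eq_div] at this
    exact_mod_cast this
  have hcop : (6 ^ k).Coprime (z / 6 ^ k : ℚ).den :=
    Nat.Coprime.pow_left _ (Nat.Coprime.mul_left (coprime_den_of_norm_le_one h₂)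
      (coprime_den_of_norm_le_one h₃))
  exact ⟨_, (Rat.coe_int_num_of_den_eq_one (hcop.symm.eq_one_of_dvd hden)).symm⟩

lemma eq_of_mem_F_of_sub_mem_Γ {x y : G} (hx : x ∈ F) (hy : y ∈ F) (hxy : x - y ∈ Γ) :
    x = y := by
  obtain ⟨q, hq, hΔ⟩ := hxy
  obtain ⟨⟨hx₀, hx₁⟩, hx₂, hx₃⟩ := hx
  obtain ⟨⟨hy₀, hy₁⟩, hy₂, hy₃⟩ := hy
  have h₂ : ‖(q : ℚ_[2])‖ ≤ 1 := by
    rw [show (q : ℚ_[2]) = x.2.1 - y.2.1 from congrArg (·.2.1) hΔ]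
    exact IsUltrametricDist.norm_sub_le_of_le hx₂ hy₂
  have h₃ : ‖(q : ℚ_[3])‖ ≤ 1 := by
    rw [show (q : ℚ_[3]) = x.2.2 - y.2.2 from congrArg (·.2.2) hΔ]
    exact IsUltrametricDist.norm_sub_le_of_le hx₃ hy₃
  obtain ⟨z, rfl⟩ := exists_intCast_eq_of_mem_zInv6 hq h₂ h₃
  have h₁ : (z : ℝ) = x.1 - y.1 := by simpa [Δ] using congrArg Prod.fst hΔ
  obtain rfl : z = 0 := by
    have : (z : ℝ) < 1 := by linarith
    have : (-1 : ℝ) < z := by linarith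
    norm_cast at *
    omega
  rw [← sub_eq_zero, ← hΔ]
  simp [Δ]

lemma rep_eq_of_mem_F {rep : G → G} (hrep : ∀ x : G, rep x ∈ F ∧ x - rep x ∈ Γ) {x y : G}
    (hy : y ∈ F) (hxy : x - y ∈ Γ) : rep x = y := by
  refine eq_of_mem_F_of_sub_mem_Γ (hrep x).1 hy ?_
  obtain ⟨q, hq, hq'⟩ := (hrep x).2
  obtain ⟨r, hr, hr'⟩ := hxy
  refine ⟨r - q, sub_mem_zInv6 hr hq, ?_⟩
  rw [show rep x - y = (x - y) - (x - rep x) by abel, ← hq', ← hr']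
  simp [Δ]

lemma A_subset_F {N k : ℕ} (hk : k < N) : A N k ⊆ F := by
  rintro x ⟨⟨h₀, h₁⟩, h₂, h₃⟩
  have hN : (0 : ℝ) < N := by exact_mod_cast (k.zero_le.trans_lt hk)
  have hkN : ((k : ℝ) + 1) / N ≤ 1 := by
    rw [div_le_one hN]; exact_mod_cast hk
  exact ⟨⟨(by positivity : (0 : ℝ) ≤ k / N).trans h₀, h₁.trans_le hkN⟩, h₂, h₃⟩

lemma rep_mem_A_iff {rep : G → G} (hrep : ∀ x : G, rep x ∈ F ∧ x - rep x ∈ Γ) {N k : ℕ}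
    (hk : k < N) (y : G) : rep y ∈ A N k ↔ ∃ q ∈ zInv6, y - Δ q ∈ A N k := by
  constructor
  · obtain ⟨q, hq, e⟩ := (hrep y).2
    exact fun h => ⟨q, hq, by rwa [e, sub_sub_cancel]⟩
  · rintro ⟨q, hq, hA⟩
    rwa [rep_eq_of_mem_F hrep (A_subset_F hk hA) ⟨q, hq, by abel⟩]

/-- `e ≡ -(u, v) (mod N^m)` in `ℤ₂ × ℤ₃`. -/
def IsNegResidue (N : ℕ) (u : ℚ_[2]) (v : ℚ_[3]) (m : ℕ) (e : ℤ) : Prop :=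
  ‖u + e‖ ≤ ‖(N : ℚ_[2]) ^ m‖ ∧ ‖v + e‖ ≤ ‖(N : ℚ_[3]) ^ m‖

namespace IsNegResidue

variable {N : ℕ} {u : ℚ_[2]} {v : ℚ_[3]} {m : ℕ} {e : ℤ}

lemma zero (hu : ‖u‖ ≤ 1) (hv : ‖v‖ ≤ 1) : IsNegResidue N u v 0 0 := by
  simpa [IsNegResidue] using ⟨hu, hv⟩

lemma of_succ (h : IsNegResidue N u v (m + 1) e) : IsNegResidue N u v m e := by
  have hle {p : ℕ} [Fact p.Prime] : ‖(N : ℚ_[p]) ^ (m + 1)‖ ≤ ‖(N : ℚ_[p]) ^ m‖ := by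
    rw [pow_succ, norm_mul]
    exact mul_le_of_le_one_right (norm_nonneg _) (IsUltrametricDist.norm_natCast_le_one _ N)
  exact ⟨h.1.trans hle, h.2.trans hle⟩

lemma iff_dvd_sub {a b : ℕ} (hN : N = 2 ^ a * 3 ^ b) (h : IsNegResidue N u v m e) (e' : ℤ) :
    IsNegResidue N u v m e' ↔ (N : ℤ) ^ m ∣ e' - e := by
  rw [dvd_iff_norm_le_norm_pow hN, IsNegResidue, IsUltrametricDist.norm_le_iff_norm_sub_le h.1,
    IsUltrametricDist.norm_le_iff_norm_sub_le h.2, add_sub_add_left_eq_sub,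
    add_sub_add_left_eq_sub]
  push_cast
  rfl

lemma norm_le_one (h : IsNegResidue N u v m e) : ‖u‖ ≤ 1 ∧ ‖v‖ ≤ 1 := by
  have key {p : ℕ} [Fact p.Prime] {w : ℚ_[p]} (hw : ‖w + e‖ ≤ ‖(N : ℚ_[p]) ^ m‖) : ‖w‖ ≤ 1 := by
    simpa using IsUltrametricDist.norm_sub_le_of_le (hw.trans (norm_natCast_pow_le_one N m))
      (Padic.norm_int_le_one e)
  exact ⟨key h.1, key h.2⟩

end IsNegResidue

lemma isNegResidue_natCast_iff {a b N : ℕ} (hN : N = 2 ^ a * 3 ^ b) (u : ℚ_[2]) (v : ℚ_[3])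
    (m C : ℕ) : IsNegResidue N u v m C ↔
      ‖u + C‖ ≤ ‖(2 : ℚ_[2]) ^ (a * m)‖ ∧ ‖v + C‖ ≤ ‖(3 : ℚ_[3]) ^ (b * m)‖ := by
  simp [IsNegResidue, norm_natCast_pow_two hN, norm_natCast_pow_three hN]

lemma rep_act_pow_mem_A_iff {rep : G → G} (hrep : ∀ x : G, rep x ∈ F ∧ x - rep x ∈ Γ)
    {N k : ℕ} (hk : k < N) {x : G} (hx : x ∈ F) (m : ℕ) :
    rep (act ((N : ℚ) ^ (m : ℤ)) x) ∈ A N k ↔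
      Int.fract ((N : ℝ) ^ m * x.1) ∈ Ico ((k : ℝ) / N) ((k + 1) / N) := by
  have hN : (0 : ℝ) < N := by exact_mod_cast k.zero_le.trans_lt hk
  obtain ⟨t, u, v⟩ := x
  obtain ⟨-, hu, hv⟩ := hx
  have hu' := norm_natCast_pow_mul_le_one N m hu
  have hv' := norm_natCast_pow_mul_le_one N m hv
  rw [rep_mem_A_iff hrep hk, ← exists_int_sub_mem_Ico_iff (by positivity)
    ((div_le_one hN).mpr (by exact_mod_cast hk))]
  simp only [act, A, Δ, zpow_natCast, Prod.mk_sub_mk, mem_ofPred_eq]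
  push_cast
  constructor
  · rintro ⟨q, hq, hI, h₂, h₃⟩
    obtain ⟨z, rfl⟩ := exists_intCast_eq_of_mem_zInv6 hq
      (by simpa using IsUltrametricDist.norm_sub_le_of_le hu' h₂)
      (by simpa using IsUltrametricDist.norm_sub_le_of_le hv' h₃)
    exact ⟨z, by exact_mod_cast hI⟩
  · rintro ⟨z, hz⟩
    refine ⟨z, intCast_mem_zInv6 z, by exact_mod_cast hz, ?_, ?_⟩
    · exact_mod_cast IsUltrametricDist.norm_sub_le_of_le hu' (Padic.norm_int_le_one z)
    · exact_mod_cast IsUltrametricDist.norm_sub_le_of_le hv' (Padic.norm_int_le_one z)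

lemma rep_act_pow_neg_mem_A_iff {rep : G → G} (hrep : ∀ x : G, rep x ∈ F ∧ x - rep x ∈ Γ)
    {a b N k : ℕ} (hN : N = 2 ^ a * 3 ^ b) (hk : k < N) {x : G} (hx : x ∈ F) (m : ℕ) :
    rep (act ((N : ℚ) ^ (-((m + 1 : ℕ) : ℤ))) x) ∈ A N k ↔
      ∃ e : ℤ, e ∈ Ico (k * (N : ℤ) ^ m) ((k + 1) * N ^ m) ∧
        IsNegResidue N x.2.1 x.2.2 (m + 1) e := by
  obtain ⟨t, u, v⟩ := x
  obtain ⟨ht, hu, hv⟩ := hx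
  have hN0 : 0 < N := k.zero_le.trans_lt hk
  set s : ℕ := N ^ (m + 1) with hs
  have hs0 : s ≠ 0 := by positivity
  have hsR : (0 : ℝ) < s := by positivity
  have hact : act ((N : ℚ) ^ (-((m + 1 : ℕ) : ℤ))) (t, u, v) =
      ((s : ℝ)⁻¹ * t, (s : ℚ_[2])⁻¹ * u, (s : ℚ_[3])⁻¹ * v) := by
    simp only [act, zpow_neg, zpow_natCast, Rat.cast_inv, Rat.cast_pow, Rat.cast_natCast, s,
      Nat.cast_pow]
  have key (e : ℤ) :
      ((s : ℝ)⁻¹ * t, (s : ℚ_[2])⁻¹ * u, (s : ℚ_[3])⁻¹ * v) - Δ (((-e : ℤ) : ℚ) / s) ∈ A N k ↔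
        e ∈ Ico (k * (N : ℤ) ^ m) ((k + 1) * N ^ m) ∧ IsNegResidue N u v (m + 1) e := by
    have hreal : (s : ℝ)⁻¹ * t - ((((-e : ℤ) : ℚ) / s : ℚ) : ℝ) = (e + t) / s := by
      push_cast; field_simp; ring
    have hk₁ : (k : ℝ) / N = ((k * (N : ℤ) ^ m : ℤ) : ℝ) / s := by
      push_cast [s]; field_simp; ring
    have hk₂ : ((k : ℝ) + 1) / N = (((k + 1) * (N : ℤ) ^ m : ℤ) : ℝ) / s := by
      push_cast [s]; field_simp; ring
    simp only [A, Δ, Prod.mk_sub_mk, mem_ofPred_eq]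
    rw [hreal, hk₁, hk₂, mem_Ico, div_le_div_iff_of_pos_right hsR,
      div_lt_div_iff_of_pos_right hsR, ← mem_Ico, intCast_add_mem_Ico_iff ht,
      norm_inv_mul_sub_intCast_div_le_one_iff hs0, norm_inv_mul_sub_intCast_div_le_one_iff hs0]
    simp [IsNegResidue, s]
  have hintegral {p : ℕ} [Fact p.Prime] {w : ℚ_[p]} (hw : ‖w‖ ≤ 1) {q : ℚ}
      (h : ‖(s : ℚ_[p])⁻¹ * w - q‖ ≤ 1) : ‖((((s : ℤ) : ℚ) * q : ℚ) : ℚ_[p])‖ ≤ 1 := by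
    rw [norm_inv_mul_sub_le_one_iff (Nat.cast_ne_zero.mpr hs0)] at h
    have := IsUltrametricDist.norm_sub_le_of_le hw
      (h.trans (IsUltrametricDist.norm_natCast_le_one _ s))
    push_cast
    rwa [sub_sub_cancel] at this
  rw [hact, rep_mem_A_iff hrep hk]
  constructor
  · rintro ⟨q, hq, hA⟩
    obtain ⟨z, hz⟩ := exists_intCast_eq_of_mem_zInv6 (intCast_mul_mem_zInv6 s hq)
      (hintegral hu hA.2.1) (hintegral hv hA.2.2)
    have hq' : q = ((-(-z) : ℤ) : ℚ) / s := by
      rw [neg_neg, ← hz]; push_cast; field_simp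
    exact ⟨-z, (key (-z)).mp (hq' ▸ hA)⟩
  · rintro ⟨e, he⟩
    exact ⟨_, intCast_div_mem_zInv6 (-e) (natCast_pow_dvd_six_pow hN (m + 1)), (key e).mpr he⟩

theorem refined_atom_general (rep : G → G) (hrep : ∀ x : G, rep x ∈ F ∧ x - rep x ∈ Γ)
    (a b : ℕ) (N : ℕ) (hN : N = 2 ^ a * 3 ^ b)
    (n : ℕ) (i : ℤ → ℕ) (hi : ∀ j : ℤ, -(n : ℤ) ≤ j → j ≤ n → i j < N) :
    {x : G | x ∈ F ∧
        (∀ m : ℕ, m ≤ n → rep (act ((N : ℚ) ^ (m : ℤ)) x) ∈ A N (i (-(m : ℤ)))) ∧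
        (∀ m : ℕ, 1 ≤ m → m ≤ n → rep (act ((N : ℚ) ^ (-(m : ℤ))) x) ∈ A N (i (m : ℤ)))} =
      {x : G |
        x.1 ∈ Set.Ico (∑ m ∈ Finset.range (n + 1), (i (-(m : ℤ)) : ℝ) / (N : ℝ) ^ (m + 1))
          ((∑ m ∈ Finset.range (n + 1), (i (-(m : ℤ)) : ℝ) / (N : ℝ) ^ (m + 1))
            + 1 / (N : ℝ) ^ (n + 1)) ∧
        (∃ z : ℚ_[2], ‖z‖ ≤ 1 ∧
          x.2.1 = 2 ^ (a * n) * z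
            - ((∑ m ∈ Finset.range n, i ((m : ℤ) + 1) * N ^ m : ℕ) : ℚ_[2])) ∧
        (∃ w : ℚ_[3], ‖w‖ ≤ 1 ∧
          x.2.2 = 3 ^ (b * n) * w
            - ((∑ m ∈ Finset.range n, i ((m : ℤ) + 1) * N ^ m : ℕ) : ℚ_[3]))} := by
  have hpos : ∀ m < n + 1, i (-(m : ℤ)) < N := fun m hm => hi _ (by omega) (by omega)
  have hneg : ∀ m < n, i ((m : ℤ) + 1) < N := fun m hm => hi _ (by omega) (by omega)
  have hdigits {u : ℚ_[2]} {v : ℚ_[3]} (hu : ‖u‖ ≤ 1) (hv : ‖v‖ ≤ 1) :=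
    forall_exists_digit_iff (R := IsNegResidue N u v) (.zero hu hv) (fun _ _ => .of_succ)
      (fun _ _ => IsNegResidue.iff_dvd_sub hN) hneg
  ext ⟨t, u, v⟩
  simp only [mem_ofPred_eq]
  rw [exists_norm_le_one_eq_mul_sub_iff (pow_ne_zero _ two_ne_zero),
    exists_norm_le_one_eq_mul_sub_iff (pow_ne_zero _ three_ne_zero),
    ← mem_Ico_sum_digits_iff hpos, ← isNegResidue_natCast_iff hN]
  constructor
  · rintro ⟨hx, hP, hQ⟩
    refine ⟨⟨hx.1, fun m hm => (rep_act_pow_mem_A_iff hrep (hpos m hm) hx m).mp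
      (hP m (by omega))⟩, (hdigits hx.2.1 hx.2.2).mp fun m hm => ?_⟩
    exact (rep_act_pow_neg_mem_A_iff hrep hN (hneg m hm) hx m).mp
      (by exact_mod_cast hQ (m + 1) (by omega) (by omega))
  · rintro ⟨⟨ht, hP⟩, hR⟩
    have hx : (t, u, v) ∈ F := ⟨ht, hR.norm_le_one⟩
    refine ⟨hx, fun m hm => (rep_act_pow_mem_A_iff hrep (hpos m (by omega)) hx m).mpr
      (hP m (by omega)), fun m hm₁ hm => ?_⟩
    obtain ⟨j, rfl⟩ : ∃ j, m = j + 1 := ⟨m - 1, by omega⟩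
    exact_mod_cast (rep_act_pow_neg_mem_A_iff hrep hN (hneg j (by omega)) hx j).mpr
      ((hdigits hx.2.1 hx.2.2).mpr hR j (by omega))

/-- An atom of the refined partition `⋁_{j=-n}^n α^j(ξ)` is a single rectangle
`[D, D+1/N^{n+1}) × (2^{an}ℤ₂ - C) × (3^{bn}ℤ₃ - C)`, where
`D = Σ_{m=0}^n i_{-m}/N^{m+1}` and `C = Σ_{m=1}^n i_m N^{m-1}`. -/
theorem refined_atom (rep : G → G) (hrep : ∀ x : G, rep x ∈ F ∧ x - rep x ∈ Γ)
    (a b : ℕ) (ha : 1 ≤ a) (hb : 1 ≤ b) (N : ℕ) (hN : N = 2 ^ a * 3 ^ b)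
    (n : ℕ) (hn : 1 ≤ n) (i : ℤ → ℕ) (hi : ∀ j : ℤ, -(n : ℤ) ≤ j → j ≤ n → i j < N) :
    {x : G | x ∈ F ∧
        (∀ m : ℕ, m ≤ n → rep (act ((N : ℚ) ^ (m : ℤ)) x) ∈ A N (i (-(m : ℤ)))) ∧
        (∀ m : ℕ, 1 ≤ m → m ≤ n → rep (act ((N : ℚ) ^ (-(m : ℤ))) x) ∈ A N (i (m : ℤ)))} =
      {x : G |
        x.1 ∈ Set.Ico (∑ m ∈ Finset.range (n + 1), (i (-(m : ℤ)) : ℝ) / (N : ℝ) ^ (m + 1))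
          ((∑ m ∈ Finset.range (n + 1), (i (-(m : ℤ)) : ℝ) / (N : ℝ) ^ (m + 1))
            + 1 / (N : ℝ) ^ (n + 1)) ∧
        (∃ z : ℚ_[2], ‖z‖ ≤ 1 ∧
          x.2.1 = 2 ^ (a * n) * z
            - ((∑ m ∈ Finset.range n, i ((m : ℤ) + 1) * N ^ m : ℕ) : ℚ_[2])) ∧
        (∃ w : ℚ_[3], ‖w‖ ≤ 1 ∧
          x.2.2 = 3 ^ (b * n) * w
            - ((∑ m ∈ Finset.range n, i ((m : ℤ) + 1) * N ^ m : ℕ) : ℚ_[3]))} :=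
  refined_atom_general rep hrep a b N hN n i hi
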